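/- Let A be a symmetric positive definite block tridiagonal matrix with blocks b_k (diagonal) and c_k (subdiagonal), and let d_k^f and d_k^b denote the forward and backward Schur complement recursions (d_1^f = b_1, d_k^f = b_k − c_k (d_{k−1}^f)⁻¹ c_kᵀ; d_N^b = b_N, d_k^b = b_k − c_{k+1}ᵀ (d_{k+1}^b)⁻¹ c_{k+1}). If 0 < α_L ≤ λ_min(A) and λ_max(A) ≤ α_U, then for every k, α_L ≤ λ_min(d_k^f + d_k^b − b_k) ≤ λ_max(d_k^f + d_k^b − b_k) ≤ α_U. -/

import Mathlib

/-!
Write `Q y = yᵀ A y` for block vectors `y = (y 0, …, y (N-1))`; the eigenvalue bounds say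
`αL |y|² ≤ Q y ≤ αU |y|²`. Completing the square in one block at a time shows that for every `x`
there is a block vector with `y k = x` whose form on the blocks `0, …, k` is `xᵀ d_k^f x`
(going down from `k`, `y j = -(d_j^f)⁻¹ c_{j+1}ᵀ y (j+1)` is the minimiser), and reversing the
block order gives one whose form on the blocks `k, …, N-1` is `xᵀ d_k^b x`. Gluing the two at
block `k` yields `Q y = xᵀ (d_k^f + d_k^b - b_k) x` with `|y|² ≥ |x|²`, hence the lower bound;
gluing with `x` alone on the other side shows inductively that every `d_j^f` and `d_j^b` is
positive definite. For the upper bound, `d_k^f` and `d_k^b` are `b_k` minus positive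
semidefinite terms, and `xᵀ b_k x = Q (x e_k) ≤ αU |x|²`.
-/

open Matrix

/-- Symmetric block tridiagonal matrix with `N` diagonal blocks `b 0, …, b (N-1)` of size
`n`, subdiagonal blocks `c i` in (0-based) position `(i, i-1)` for `i = 1,…,N-1`, and the
transposes `(c (i+1))ᵀ` in position `(i, i+1)`. -/
def blockTri (N n : ℕ) (b c : ℕ → Matrix (Fin n) (Fin n) ℝ) :
    Matrix (Fin N × Fin n) (Fin N × Fin n) ℝ :=
  fun p r =>
    if p.1 = r.1 then b (p.1 : ℕ) p.2 r.2
    else if (r.1 : ℕ) + 1 = (p.1 : ℕ) then c (p.1 : ℕ) p.2 r.2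
    else if (p.1 : ℕ) + 1 = (r.1 : ℕ) then c (r.1 : ℕ) r.2 p.2
    else 0

/-- Forward (Thomas) block elimination: `d 0 = b 0`,
`d (k+1) = b (k+1) − c (k+1) (d k)⁻¹ (c (k+1))ᵀ`. -/
noncomputable def fwdD {n : ℕ} (b c : ℕ → Matrix (Fin n) (Fin n) ℝ) :
    ℕ → Matrix (Fin n) (Fin n) ℝ
  | 0 => b 0
  | k + 1 => b (k + 1) - c (k + 1) * (fwdD b c k)⁻¹ * (c (k + 1))ᵀ

/-- Auxiliary backward elimination sequence: `bwdAux N b c j` is the backward Schur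
complement at block index `N - 1 - j`. -/
noncomputable def bwdAux {n : ℕ} (N : ℕ) (b c : ℕ → Matrix (Fin n) (Fin n) ℝ) :
    ℕ → Matrix (Fin n) (Fin n) ℝ
  | 0 => b (N - 1)
  | j + 1 => b (N - 1 - (j + 1)) - (c (N - 1 - j))ᵀ * (bwdAux N b c j)⁻¹ * c (N - 1 - j)

/-- Backward block elimination: `bwdD N b c (N-1) = b (N-1)` and
`bwdD N b c k = b k − (c (k+1))ᵀ (bwdD N b c (k+1))⁻¹ (c (k+1))` for `k < N-1`. -/
noncomputable def bwdD {n : ℕ} (N : ℕ) (b c : ℕ → Matrix (Fin n) (Fin n) ℝ) (k : ℕ) :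
    Matrix (Fin n) (Fin n) ℝ :=
  bwdAux N b c (N - 1 - k)

/-- Forward elimination of the right-hand side: `s 0 = r 0`,
`s (k+1) = r (k+1) − c (k+1) (d k)⁻¹ s k`. -/
noncomputable def fwdS {n : ℕ} (b c : ℕ → Matrix (Fin n) (Fin n) ℝ)
    (r : ℕ → Fin n → ℝ) : ℕ → Fin n → ℝ
  | 0 => r 0
  | k + 1 => r (k + 1) - (c (k + 1) * (fwdD b c k)⁻¹) *ᵥ (fwdS b c r k)

/-- Auxiliary backward elimination of the right-hand side. -/
noncomputable def bwdSAux {n : ℕ} (N : ℕ) (b c : ℕ → Matrix (Fin n) (Fin n) ℝ)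
    (r : ℕ → Fin n → ℝ) : ℕ → Fin n → ℝ
  | 0 => r (N - 1)
  | j + 1 => r (N - 1 - (j + 1)) -
      ((c (N - 1 - j))ᵀ * (bwdAux N b c j)⁻¹) *ᵥ (bwdSAux N b c r j)

/-- Backward elimination of the right-hand side:
`bwdS N b c r k = r k − (c (k+1))ᵀ (bwdD N b c (k+1))⁻¹ (bwdS N b c r (k+1))`. -/
noncomputable def bwdS {n : ℕ} (N : ℕ) (b c : ℕ → Matrix (Fin n) (Fin n) ℝ)
    (r : ℕ → Fin n → ℝ) (k : ℕ) : Fin n → ℝ :=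
  bwdSAux N b c r (N - 1 - k)

open Finset

namespace Matrix.IsHermitian

open scoped MatrixOrder

variable {m : Type*} [Fintype m] [DecidableEq m] {A : Matrix m m ℝ}

lemma le_eigenvalues_iff (hA : A.IsHermitian) (r : ℝ) :
    (∀ i, r ≤ hA.eigenvalues i) ↔ ∀ x : m → ℝ, r * (x ⬝ᵥ x) ≤ x ⬝ᵥ (A *ᵥ x) := by
  have hH : (A - algebraMap ℝ _ r).IsHermitian := hA.isSelfAdjoint.sub (.algebraMap _ (.all r))
  rw [← Set.forall_mem_range (p := (r ≤ ·)), ← hA.spectrum_real_eq_range_eigenvalues,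
    ← algebraMap_le_iff_le_spectrum hA.isSelfAdjoint, le_iff, posSemidef_iff_dotProduct_mulVec,
    and_iff_right hH]
  simp [sub_mulVec, Algebra.algebraMap_eq_smul_one, smul_mulVec, dotProduct_smul]

lemma eigenvalues_le_iff (hA : A.IsHermitian) (r : ℝ) :
    (∀ i, hA.eigenvalues i ≤ r) ↔ ∀ x : m → ℝ, x ⬝ᵥ (A *ᵥ x) ≤ r * (x ⬝ᵥ x) := by
  have hH : (algebraMap ℝ _ r - A).IsHermitian := (IsSelfAdjoint.algebraMap _ (.all r)).sub hA
  rw [← Set.forall_mem_range (p := (· ≤ r)), ← hA.spectrum_real_eq_range_eigenvalues,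
    ← le_algebraMap_iff_spectrum_le hA.isSelfAdjoint, le_iff, posSemidef_iff_dotProduct_mulVec,
    and_iff_right hH]
  simp [sub_mulVec, Algebra.algebraMap_eq_smul_one, smul_mulVec, dotProduct_smul]

end Matrix.IsHermitian

lemma schur_complement_dotProduct_mulVec {m l : Type*} [Fintype m] [Fintype l] [DecidableEq l]
    (b : Matrix m m ℝ) (c : Matrix m l ℝ) (d : Matrix l l ℝ) (hd : IsUnit d) (x : m → ℝ) :
    x ⬝ᵥ ((b - c * d⁻¹ * cᵀ) *ᵥ x) =
      x ⬝ᵥ (b *ᵥ x) + 2 * (x ⬝ᵥ (c *ᵥ -(d⁻¹ *ᵥ (cᵀ *ᵥ x))))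
        + -(d⁻¹ *ᵥ (cᵀ *ᵥ x)) ⬝ᵥ (d *ᵥ -(d⁻¹ *ᵥ (cᵀ *ᵥ x))) := by
  set w := cᵀ *ᵥ x
  have hc : ∀ v, x ⬝ᵥ (c *ᵥ v) = w ⬝ᵥ v := fun v => by
    rw [dotProduct_mulVec, ← mulVec_transpose]
  have hdw : d *ᵥ (d⁻¹ *ᵥ w) = w := by
    rw [mulVec_mulVec, mul_nonsing_inv d (d.isUnit_iff_isUnit_det.mp hd), one_mulVec]
  have hcdc : x ⬝ᵥ ((c * d⁻¹ * cᵀ) *ᵥ x) = w ⬝ᵥ (d⁻¹ *ᵥ w) := by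
    rw [← mulVec_mulVec, ← mulVec_mulVec, hc]
  have hd' : -(d⁻¹ *ᵥ w) ⬝ᵥ (d *ᵥ -(d⁻¹ *ᵥ w)) = w ⬝ᵥ (d⁻¹ *ᵥ w) := by
    rw [mulVec_neg, hdw, neg_dotProduct, dotProduct_neg, neg_neg, dotProduct_comm]
  rw [sub_mulVec, dotProduct_sub, hcdc, hd', hc, dotProduct_neg]
  ring

lemma dotProduct_mulVec_prod {ι m : Type*} [Fintype ι] [Fintype m]
    (M : Matrix (ι × m) (ι × m) ℝ) (y : ι → m → ℝ) :
    (fun p => y p.1 p.2) ⬝ᵥ (M *ᵥ fun p => y p.1 p.2)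
      = ∑ k, ∑ l, y k ⬝ᵥ ((fun i j => M (k, i) (l, j)) *ᵥ y l) := by
  simp only [dotProduct, mulVec, Fintype.sum_prod_type, mul_sum]
  exact sum_congr rfl fun k _ => sum_comm

variable {n : ℕ}

/-- `blockTriForm b c y s t` is the quadratic form at `(y s, …, y (t - 1))` of the principal
submatrix of `blockTri N n b c` on the block rows `s, …, t - 1`. -/
noncomputable def blockTriForm (b c : ℕ → Matrix (Fin n) (Fin n) ℝ) (y : ℕ → Fin n → ℝ)
    (s t : ℕ) : ℝ :=
  ∑ j ∈ Ico s t, y j ⬝ᵥ (b j *ᵥ y j) + 2 * ∑ j ∈ Ico (s + 1) t, y j ⬝ᵥ (c j *ᵥ y (j - 1))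

section blockTriForm

variable (b c : ℕ → Matrix (Fin n) (Fin n) ℝ)

lemma blockTriForm_congr {y y' : ℕ → Fin n → ℝ} {s t : ℕ} (h : ∀ j ∈ Ico s t, y j = y' j) :
    blockTriForm b c y s t = blockTriForm b c y' s t := by
  have h' : ∀ j ∈ Ico (s + 1) t, y (j - 1) = y' (j - 1) := fun j hj =>
    h _ (by simp only [mem_Ico] at hj ⊢; omega)
  exact congrArg₂ (· + 2 * ·) (sum_congr rfl fun j hj => by rw [h j hj])
    (sum_congr rfl fun j hj => by rw [h j (Ico_subset_Ico_left (by omega) hj), h' j hj])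

lemma blockTriForm_add_one (y : ℕ → Fin n → ℝ) {s t : ℕ} (hst : s < t) :
    blockTriForm b c y s (t + 1) = blockTriForm b c y s t + y t ⬝ᵥ (b t *ᵥ y t)
      + 2 * (y t ⬝ᵥ (c t *ᵥ y (t - 1))) := by
  simp only [blockTriForm, sum_Ico_succ_top hst.le, sum_Ico_succ_top hst]
  ring

lemma blockTriForm_split (y : ℕ → Fin n → ℝ) {s k t : ℕ} (hs : s ≤ k) (ht : k < t) :
    blockTriForm b c y s t
      = blockTriForm b c y s (k + 1) + blockTriForm b c y k t - y k ⬝ᵥ (b k *ᵥ y k) := by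
  simp only [blockTriForm]
  rw [← sum_Ico_consecutive _ (show s ≤ k + 1 by omega) ht,
    ← sum_Ico_consecutive _ (show s + 1 ≤ k + 1 by omega) ht, sum_eq_sum_Ico_succ_bot ht]
  ring

lemma blockTriForm_single {s k t : ℕ} (hk : k ∈ Ico s t) (x : Fin n → ℝ) :
    blockTriForm b c (Pi.single k x) s t = x ⬝ᵥ (b k *ᵥ x) := by
  have hc : ∀ j ∈ Ico (s + 1) t,
      (Pi.single k x : ℕ → Fin n → ℝ) j ⬝ᵥ (c j *ᵥ (Pi.single k x : ℕ → Fin n → ℝ) (j - 1))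
        = 0 := by
    intro j hj
    rcases eq_or_ne j k with rfl | hj
    · have hj1 : j - 1 ≠ j := by simp only [mem_Ico] at hj; omega
      rw [Pi.single_eq_of_ne hj1, mulVec_zero, dotProduct_zero]
    · rw [Pi.single_eq_of_ne hj, zero_dotProduct]
  rw [blockTriForm, sum_eq_zero hc, mul_zero, add_zero, sum_eq_single_of_mem k hk]
  · simp
  · intro j _ hj
    simp [hj]

variable {N : ℕ}

lemma dotProduct_mulVec_le_of_blockTriForm_le {αU : ℝ}
    (hup : ∀ y, blockTriForm b c y 0 N ≤ αU * ∑ j ∈ range N, y j ⬝ᵥ y j) {k : ℕ} (hk : k < N)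
    (x : Fin n → ℝ) : x ⬝ᵥ (b k *ᵥ x) ≤ αU * (x ⬝ᵥ x) := by
  have h := hup (Pi.single k x)
  rwa [blockTriForm_single b c (mem_Ico.2 ⟨Nat.zero_le k, hk⟩),
    sum_eq_single_of_mem k (mem_range.2 hk) fun j _ hj => by simp [hj],
    Pi.single_eq_same] at h

lemma le_blockTriForm_add_blockTriForm_sub {αL : ℝ}
    (hlow : ∀ y, αL * ∑ j ∈ range N, y j ⬝ᵥ y j ≤ blockTriForm b c y 0 N) (hαL : 0 ≤ αL)
    {k : ℕ} (hk : k < N) {u v : ℕ → Fin n → ℝ} {x : Fin n → ℝ} (hu : u k = x) (hv : v k = x) :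
    αL * (x ⬝ᵥ x) ≤ blockTriForm b c u 0 (k + 1) + blockTriForm b c v k N - x ⬝ᵥ (b k *ᵥ x) := by
  set y : ℕ → Fin n → ℝ := fun j => if j ≤ k then u j else v j
  have hyk : y k = x := by simp [y, hu]
  have hnorm : x ⬝ᵥ x ≤ ∑ j ∈ range N, y j ⬝ᵥ y j := hyk ▸
    single_le_sum (fun j _ => by simpa using dotProduct_star_self_nonneg (y j)) (mem_range.2 hk)
  have hu' : blockTriForm b c y 0 (k + 1) = blockTriForm b c u 0 (k + 1) :=
    blockTriForm_congr b c fun j hj => if_pos (by simp only [mem_Ico] at hj; omega)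
  have hv' : blockTriForm b c y k N = blockTriForm b c v k N :=
    blockTriForm_congr b c fun j hj => by
      rcases eq_or_ne j k with rfl | hjk
      · rw [hyk, hv]
      · exact if_neg (by simp only [mem_Ico] at hj; omega)
  calc αL * (x ⬝ᵥ x) ≤ αL * ∑ j ∈ range N, y j ⬝ᵥ y j := mul_le_mul_of_nonneg_left hnorm hαL
    _ ≤ blockTriForm b c y 0 N := hlow y
    _ = _ := by rw [blockTriForm_split b c y (Nat.zero_le k) hk, hu', hv', hyk]

end blockTriForm

def triBlock (b c : ℕ → Matrix (Fin n) (Fin n) ℝ) (k l : ℕ) : Matrix (Fin n) (Fin n) ℝ :=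
  if k = l then b k else if l + 1 = k then c k else if k + 1 = l then (c l)ᵀ else 0

section blockTri

variable (b c : ℕ → Matrix (Fin n) (Fin n) ℝ) {N : ℕ}

lemma blockTri_apply (k l : Fin N) (i j : Fin n) :
    blockTri N n b c (k, i) (l, j) = triBlock b c k l i j := by
  simp only [blockTri, triBlock, Fin.val_inj]
  split_ifs <;> rfl

lemma sum_sum_triBlock (y : ℕ → Fin n → ℝ) (N : ℕ) :
    ∑ k ∈ range N, ∑ l ∈ range N, y k ⬝ᵥ (triBlock b c k l *ᵥ y l) = blockTriForm b c y 0 N := by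
  induction N with
  | zero => simp [blockTriForm]
  | succ N ih =>
    rw [sum_range_succ, sum_congr rfl fun k _ => sum_range_succ _ N, sum_add_distrib, ih,
      sum_range_succ, triBlock, if_pos rfl]
    rcases N with _ | N
    · simp [blockTriForm]
    have hcol : ∑ k ∈ range (N + 1), y k ⬝ᵥ (triBlock b c k (N + 1) *ᵥ y (N + 1))
        = y N ⬝ᵥ ((c (N + 1))ᵀ *ᵥ y (N + 1)) := by
      rw [sum_eq_single_of_mem N (self_mem_range_succ N) fun k hk hkN => by
        rw [mem_range] at hk
        rw [triBlock, if_neg (by omega), if_neg (by omega), if_neg (by omega), zero_mulVec,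
          dotProduct_zero]]
      rw [triBlock, if_neg (by omega), if_neg (by omega), if_pos rfl]
    have hrow : ∑ l ∈ range (N + 1), y (N + 1) ⬝ᵥ (triBlock b c (N + 1) l *ᵥ y l)
        = y (N + 1) ⬝ᵥ (c (N + 1) *ᵥ y N) := by
      rw [sum_eq_single_of_mem N (self_mem_range_succ N) fun l hl hlN => by
        rw [mem_range] at hl
        rw [triBlock, if_neg (by omega), if_neg (by omega), if_neg (by omega), zero_mulVec,
          dotProduct_zero]]
      rw [triBlock, if_neg (by omega), if_pos rfl]
    rw [hcol, hrow, blockTriForm_add_one b c y (by omega : 0 < N + 1), add_tsub_cancel_right,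
      mulVec_transpose, dotProduct_comm, ← dotProduct_mulVec]
    ring

lemma dotProduct_blockTri_mulVec (y : ℕ → Fin n → ℝ) :
    (fun p : Fin N × Fin n => y p.1 p.2) ⬝ᵥ (blockTri N n b c *ᵥ fun p => y p.1 p.2)
      = blockTriForm b c y 0 N := by
  rw [dotProduct_mulVec_prod (y := fun k : Fin N => y k)]
  simp only [blockTri_apply]
  rw [← sum_sum_triBlock,
    Fin.sum_univ_eq_sum_range (fun k => ∑ l : Fin N, y k ⬝ᵥ (triBlock b c k l *ᵥ y l))]
  exact sum_congr rfl fun k _ =>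
    Fin.sum_univ_eq_sum_range (fun l => y k ⬝ᵥ (triBlock b c k l *ᵥ y l)) N

lemma isHermitian_of_isHermitian_blockTri (hA : (blockTri N n b c).IsHermitian) {j : ℕ}
    (hj : j < N) : (b j).IsHermitian := by
  ext i i'
  simpa [blockTri_apply, triBlock] using congrFun (congrFun hA (⟨j, hj⟩, i)) (⟨j, hj⟩, i')

lemma blockTriForm_mem_Icc (hA : (blockTri N n b c).IsHermitian) {αL αU : ℝ}
    (hbd : ∀ i, αL ≤ hA.eigenvalues i ∧ hA.eigenvalues i ≤ αU) (y : ℕ → Fin n → ℝ) :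
    blockTriForm b c y 0 N ∈
      Set.Icc (αL * ∑ j ∈ range N, y j ⬝ᵥ y j) (αU * ∑ j ∈ range N, y j ⬝ᵥ y j) := by
  have hY : (fun p : Fin N × Fin n => y p.1 p.2) ⬝ᵥ (fun p => y p.1 p.2)
      = ∑ j ∈ range N, y j ⬝ᵥ y j := by
    simp only [dotProduct, Fintype.sum_prod_type]
    exact Fin.sum_univ_eq_sum_range (fun j => ∑ i, y j i * y j i) N
  rw [← hY, ← dotProduct_blockTri_mulVec]
  exact ⟨(hA.le_eigenvalues_iff αL).1 (fun i => (hbd i).1) _,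
    (hA.eigenvalues_le_iff αU).1 (fun i => (hbd i).2) _⟩

end blockTri

section forward

variable (b c : ℕ → Matrix (Fin n) (Fin n) ℝ)

lemma exists_blockTriForm_eq_fwdD (k : ℕ) (hd : ∀ j < k, IsUnit (fwdD b c j))
    (x : Fin n → ℝ) :
    ∃ y : ℕ → Fin n → ℝ, y k = x ∧ blockTriForm b c y 0 (k + 1) = x ⬝ᵥ (fwdD b c k *ᵥ x) := by
  induction k generalizing x with
  | zero => exact ⟨fun _ => x, rfl, by simp [blockTriForm, fwdD]⟩
  | succ k ih =>
    obtain ⟨y, hyk, hy⟩ := ih (fun j hj => hd j (by omega))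
      (-((fwdD b c k)⁻¹ *ᵥ ((c (k + 1))ᵀ *ᵥ x)))
    refine ⟨Function.update y (k + 1) x, Function.update_self .., ?_⟩
    rw [blockTriForm_add_one b c _ (by omega : 0 < k + 1), blockTriForm_congr b c (y' := y)
      fun j hj => Function.update_of_ne (by simp only [mem_Ico] at hj; omega) _ _]
    simp only [Function.update_self, add_tsub_cancel_right,
      Function.update_of_ne k.succ_ne_self.symm, hyk, hy]
    rw [fwdD, schur_complement_dotProduct_mulVec _ _ _ (hd k k.lt_succ_self)]
    ring

lemma isHermitian_fwdD {k : ℕ} (hb : ∀ j ≤ k, (b j).IsHermitian) :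
    (fwdD b c k).IsHermitian := by
  induction k with
  | zero => exact hb 0 le_rfl
  | succ k ih =>
    rw [fwdD, ← conjTranspose_eq_transpose_of_trivial]
    exact (hb _ le_rfl).sub
      (isHermitian_mul_mul_conjTranspose _ (ih fun j hj => hb j (by omega)).inv)

lemma dotProduct_fwdD_mulVec_le {k : ℕ} (hd : ∀ j < k, (fwdD b c j).PosDef) (x : Fin n → ℝ) :
    x ⬝ᵥ (fwdD b c k *ᵥ x) ≤ x ⬝ᵥ (b k *ᵥ x) := by
  cases k with
  | zero => exact le_rfl
  | succ k =>
    rw [fwdD, sub_mulVec, dotProduct_sub, sub_le_self_iff, ← mulVec_mulVec, ← mulVec_mulVec,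
      dotProduct_mulVec, ← mulVec_transpose]
    simpa using (hd k k.lt_succ_self).inv.posSemidef.dotProduct_mulVec_nonneg ((c (k + 1))ᵀ *ᵥ x)

lemma posDef_fwdD {N : ℕ} {αL : ℝ}
    (hlow : ∀ y, αL * ∑ j ∈ range N, y j ⬝ᵥ y j ≤ blockTriForm b c y 0 N) (hαL : 0 < αL)
    (hb : ∀ j < N, (b j).IsHermitian) : ∀ k < N, (fwdD b c k).PosDef := by
  intro k
  induction k using Nat.strong_induction_on with
  | _ k ih =>
  intro hk
  refine posDef_iff_dotProduct_mulVec.2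
    ⟨isHermitian_fwdD b c fun j hj => hb j (by omega), fun x hx => ?_⟩
  obtain ⟨u, hu, hform⟩ :=
    exists_blockTriForm_eq_fwdD b c k (fun j hj => (ih j hj (by omega)).isUnit) x
  have h := le_blockTriForm_add_blockTriForm_sub b c hlow hαL.le hk hu
    (v := (Pi.single k x : ℕ → Fin n → ℝ)) (Pi.single_eq_same _ _)
  rw [hform, blockTriForm_single b c (mem_Ico.2 ⟨le_rfl, hk⟩), add_sub_cancel_right] at h
  have hxx : 0 < x ⬝ᵥ x := by simpa using dotProduct_self_star_pos_iff.2 hx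
  simpa using (mul_pos hαL hxx).trans_le h

end forward

/-- Reversing the block order `j ↦ N - 1 - j` turns `blockTri N n b c` into
`blockTri N n (reflectDiag N b) (reflectSub N c)`, and backward elimination into forward
elimination. -/
def reflectDiag (N : ℕ) (b : ℕ → Matrix (Fin n) (Fin n) ℝ) : ℕ → Matrix (Fin n) (Fin n) ℝ :=
  fun j => b (N - 1 - j)

def reflectSub (N : ℕ) (c : ℕ → Matrix (Fin n) (Fin n) ℝ) : ℕ → Matrix (Fin n) (Fin n) ℝ :=
  fun j => (c (N - j))ᵀ

section backward

variable (b c : ℕ → Matrix (Fin n) (Fin n) ℝ) {N : ℕ}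

lemma bwdD_eq_fwdD_reflect (k : ℕ) :
    bwdD N b c k = fwdD (reflectDiag N b) (reflectSub N c) (N - 1 - k) := by
  suffices h : bwdAux N b c = fwdD (reflectDiag N b) (reflectSub N c) from congrFun h _
  funext j
  induction j with
  | zero => rfl
  | succ j ih =>
    rw [bwdAux, fwdD, ih, reflectDiag, reflectSub, transpose_transpose,
      show N - (j + 1) = N - 1 - j by omega]

lemma fwdD_reflect_eq_bwdD {j : ℕ} (hj : j < N) :
    fwdD (reflectDiag N b) (reflectSub N c) j = bwdD N b c (N - 1 - j) := by
  rw [bwdD_eq_fwdD_reflect, show N - 1 - (N - 1 - j) = j by omega]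

lemma blockTriForm_reflect {k : ℕ} (hk : k < N) (z : ℕ → Fin n → ℝ) :
    blockTriForm b c (fun j => z (N - 1 - j)) k N
      = blockTriForm (reflectDiag N b) (reflectSub N c) z 0 (N - k) := by
  have hdiag := sum_Ico_reflect (fun j => z (N - 1 - j) ⬝ᵥ (b j *ᵥ z (N - 1 - j))) 0
    (show N - k ≤ N - 1 + 1 by omega)
  have hsub := sum_Ico_reflect (fun j => z (N - 1 - j) ⬝ᵥ (c j *ᵥ z (N - 1 - (j - 1)))) 1
    (show N - k ≤ N + 1 by omega)
  rw [show N - 1 + 1 - (N - k) = k by omega, show N - 1 + 1 - 0 = N by omega] at hdiag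
  rw [show N + 1 - (N - k) = k + 1 by omega, show N + 1 - 1 = N by omega] at hsub
  rw [blockTriForm, blockTriForm, ← hdiag, ← hsub]
  refine congrArg₂ (· + 2 * ·) (sum_congr rfl fun j hj => ?_) (sum_congr rfl fun j hj => ?_) <;>
    rw [mem_Ico] at hj
  · rw [reflectDiag, show N - 1 - (N - 1 - j) = j by omega]
  · rw [reflectSub, show N - 1 - (N - j) = j - 1 by omega, show N - 1 - (N - j - 1) = j by omega,
      mulVec_transpose, dotProduct_comm (z j), ← dotProduct_mulVec]

lemma exists_blockTriForm_eq_bwdD {k : ℕ} (hk : k < N)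
    (hd : ∀ j, k < j → j < N → IsUnit (bwdD N b c j)) (x : Fin n → ℝ) :
    ∃ y : ℕ → Fin n → ℝ, y k = x ∧ blockTriForm b c y k N = x ⬝ᵥ (bwdD N b c k *ᵥ x) := by
  obtain ⟨z, hz, hform⟩ := exists_blockTriForm_eq_fwdD (reflectDiag N b) (reflectSub N c)
    (N - 1 - k) (fun j hj => by
      rw [fwdD_reflect_eq_bwdD b c (by omega : j < N)]; exact hd _ (by omega) (by omega)) x
  refine ⟨fun j => z (N - 1 - j), hz, ?_⟩
  rw [blockTriForm_reflect b c hk, show N - k = N - 1 - k + 1 by omega, hform,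
    bwdD_eq_fwdD_reflect]

lemma dotProduct_bwdD_mulVec_le {k : ℕ} (hk : k < N)
    (hd : ∀ j, k < j → j < N → (bwdD N b c j).PosDef) (x : Fin n → ℝ) :
    x ⬝ᵥ (bwdD N b c k *ᵥ x) ≤ x ⬝ᵥ (b k *ᵥ x) := by
  have h := dotProduct_fwdD_mulVec_le (reflectDiag N b) (reflectSub N c) (k := N - 1 - k)
    (fun j hj => by
      rw [fwdD_reflect_eq_bwdD b c (by omega : j < N)]; exact hd _ (by omega) (by omega)) x
  rwa [← bwdD_eq_fwdD_reflect, reflectDiag, show N - 1 - (N - 1 - k) = k by omega] at h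

lemma posDef_bwdD {αL : ℝ}
    (hlow : ∀ y, αL * ∑ j ∈ range N, y j ⬝ᵥ y j ≤ blockTriForm b c y 0 N) (hαL : 0 < αL)
    (hb : ∀ j < N, (b j).IsHermitian) {k : ℕ} (hk : k < N) : (bwdD N b c k).PosDef := by
  have hlow' (z : ℕ → Fin n → ℝ) : αL * ∑ j ∈ range N, z j ⬝ᵥ z j
      ≤ blockTriForm (reflectDiag N b) (reflectSub N c) z 0 N := by
    have h := hlow fun j => z (N - 1 - j)
    rwa [sum_range_reflect (fun j => z j ⬝ᵥ z j), blockTriForm_reflect b c (by omega),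
      Nat.sub_zero] at h
  rw [bwdD_eq_fwdD_reflect]
  exact posDef_fwdD _ _ hlow' hαL (fun j hj => hb _ (by omega)) _ (by omega)

end backward

theorem stmt12_general (N n : ℕ)
    (b c : ℕ → Matrix (Fin n) (Fin n) ℝ)
    (A : Matrix (Fin N × Fin n) (Fin N × Fin n) ℝ) (hAdef : A = blockTri N n b c)
    (hA : A.PosDef)
    (αL αU : ℝ) (hαL : 0 < αL)
    (hbd : ∀ i, αL ≤ hA.1.eigenvalues i ∧ hA.1.eigenvalues i ≤ αU) :
    ∀ k < N, ∃ h : (fwdD b c k + bwdD N b c k - b k).IsHermitian,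
      ∀ i, αL ≤ h.eigenvalues i ∧ h.eigenvalues i ≤ αU := by
  intro k hk
  subst hAdef
  have hb j (hj : j < N) := isHermitian_of_isHermitian_blockTri b c hA.1 hj
  have hform := blockTriForm_mem_Icc b c hA.1 hbd
  have hfwd := posDef_fwdD b c (fun y => (hform y).1) hαL hb
  have hbwd j (hj : j < N) := posDef_bwdD b c (fun y => (hform y).1) hαL hb hj
  have hM := ((hfwd k hk).1.add (hbwd k hk).1).sub (hb k hk)
  refine ⟨hM, fun i => ⟨(hM.le_eigenvalues_iff αL).2 (fun x => ?_) i,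
    (hM.eigenvalues_le_iff αU).2 (fun x => ?_) i⟩⟩ <;>
    simp only [sub_mulVec, add_mulVec, dotProduct_add, dotProduct_sub]
  · obtain ⟨u, hu, hfu⟩ :=
      exists_blockTriForm_eq_fwdD b c k (fun j hj => (hfwd j (by omega)).isUnit) x
    obtain ⟨v, hv, hbv⟩ :=
      exists_blockTriForm_eq_bwdD b c hk (fun j _ hj => (hbwd j hj).isUnit) x
    rw [← hfu, ← hbv]
    exact le_blockTriForm_add_blockTriForm_sub b c (fun y => (hform y).1) hαL.le hk hu hv
  · have hf := dotProduct_fwdD_mulVec_le b c (k := k) (fun j hj => hfwd j (by omega)) x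
    have hbw := dotProduct_bwdD_mulVec_le b c hk (fun j _ hj => hbwd j hj) x
    have hbk := dotProduct_mulVec_le_of_blockTriForm_le b c (fun y => (hform y).2) hk x
    linarith

/-- If the symmetric positive definite block tridiagonal matrix `A` has
all eigenvalues in `[αL, αU]` with `0 < αL`, then for every `k` the combined (Mayne–Fraser)
block `d_k^f + d_k^b − b_k` is symmetric with all eigenvalues in `[αL, αU]`. -/
theorem stmt12 (N n : ℕ) [NeZero N] [NeZero n]
    (b c : ℕ → Matrix (Fin n) (Fin n) ℝ)
    (A : Matrix (Fin N × Fin n) (Fin N × Fin n) ℝ) (hAdef : A = blockTri N n b c)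
    (hA : A.PosDef)
    (αL αU : ℝ) (hαL : 0 < αL)
    (hbd : ∀ i, αL ≤ hA.1.eigenvalues i ∧ hA.1.eigenvalues i ≤ αU) :
    ∀ k < N, ∃ h : (fwdD b c k + bwdD N b c k - b k).IsHermitian,
      ∀ i, αL ≤ h.eigenvalues i ∧ h.eigenvalues i ≤ αU :=
  stmt12_general N n b c A hAdef hA αL αU hαL hbd
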